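/- Let X be σ-sub-Gaussian and S the average of n independent copies of X. Then for every λ ∈ [0,1), E[exp(nλ(S − E X)²/(2σ²))] ≤ 1/√(1−λ). -/

import Mathlib

/-!
For a standard Gaussian `G`, `exp (z ^ 2 / 2) = E[exp (z G)]`. Linearising the square this way and
exchanging the two expectations, a variable `Z` with `E[exp (t Z)] ≤ exp (v t ^ 2 / 2)` satisfies
`E[exp (λ Z ^ 2 / (2 v))] ≤ E[exp (λ G ^ 2 / 2)] = (1 - λ) ^ (-1/2)`. The centred sample mean
`Z = S - m` has this property with `v = σ ^ 2 / n`, because moment generating functions of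
independent variables multiply.
-/

open MeasureTheory ProbabilityTheory Real Finset

namespace ProbabilityTheory

lemma lintegral_exp_mul_sq_gaussianReal {a : ℝ} (ha : a < 1) :
    ∫⁻ x, ENNReal.ofReal (exp (a * x ^ 2 / 2)) ∂gaussianReal 0 1 =
      ENNReal.ofReal (1 / √(1 - a)) := by
  have hpdf : ∀ x, gaussianPDFReal 0 1 x * exp (a * x ^ 2 / 2) =
      (√(2 * π))⁻¹ * exp (-((1 - a) / 2) * x ^ 2) := fun x => by
    rw [gaussianPDFReal, mul_assoc, ← exp_add, NNReal.coe_one, mul_one]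
    ring_nf
  rw [gaussianReal_of_var_ne_zero 0 one_ne_zero, lintegral_withDensity_eq_lintegral_mul _
    (measurable_gaussianPDF 0 1) (by fun_prop)]
  simp only [Pi.mul_apply, gaussianPDF, ← ENNReal.ofReal_mul (gaussianPDFReal_nonneg 0 1 _), hpdf]
  rw [← ofReal_integral_eq_lintegral_ofReal
      ((integrable_exp_neg_mul_sq (by linarith)).const_mul _) (ae_of_all _ fun _ => by positivity),
    integral_const_mul, integral_gaussian, div_div_eq_mul_div, sqrt_div' _ (by linarith),
    mul_comm π]
  field_simp

variable {Ω : Type*} [MeasurableSpace Ω] {μ : Measure Ω}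

lemma iIndepFun.mgf_sum_le {ι : Type*} {Y : ι → Ω → ℝ} (hY : iIndepFun Y μ)
    (hmeas : ∀ i, AEMeasurable (Y i) μ) (s : Finset ι) {v : ι → ℝ} {t : ℝ}
    (h : ∀ i ∈ s, mgf (Y i) μ t ≤ exp (v i * t ^ 2 / 2)) :
    mgf (∑ i ∈ s, Y i) μ t ≤ exp ((∑ i ∈ s, v i) * t ^ 2 / 2) := by
  rw [hY.mgf_sum₀ hmeas, sum_mul, sum_div, exp_sum]
  exact prod_le_prod (fun _ _ => mgf_nonneg) h

variable {Z : Ω → ℝ}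

lemma ofReal_mgf_eq_lintegral {t : ℝ} (h : Integrable (fun ω => exp (t * Z ω)) μ) :
    ENNReal.ofReal (mgf Z μ t) = ∫⁻ ω, ENNReal.ofReal (exp (t * Z ω)) ∂μ :=
  ofReal_integral_eq_lintegral_ofReal h (ae_of_all _ fun _ => (exp_pos _).le)

lemma integrable_exp_mul_of_integrable_exp_mul_sq {c : ℝ} (hc : 0 < c) (hZ : AEMeasurable Z μ)
    (h : Integrable (fun ω => exp (c * Z ω ^ 2)) μ) (t : ℝ) :
    Integrable (fun ω => exp (t * Z ω)) μ := by
  refine (h.const_mul (exp (t ^ 2 / (4 * c)))).mono' (by fun_prop) (ae_of_all _ fun ω => ?_)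
  rw [norm_of_nonneg (exp_pos _).le, ← exp_add, exp_le_exp, div_add' _ _ _ (by positivity),
    le_div_iff₀ (by positivity)]
  nlinarith [sq_nonneg (2 * c * Z ω - t)]

lemma lintegral_exp_mul_sq_le_of_mgf_le [SFinite μ] (hZ : AEMeasurable Z μ) {v lam : ℝ}
    (hv : 0 < v) (hlam0 : 0 ≤ lam) (hlam1 : lam < 1)
    (hint : ∀ t, Integrable (fun ω => exp (t * Z ω)) μ)
    (hmgf : ∀ t, mgf Z μ t ≤ exp (v * t ^ 2 / 2)) :
    ∫⁻ ω, ENNReal.ofReal (exp (lam * Z ω ^ 2 / (2 * v))) ∂μ ≤ ENNReal.ofReal (1 / √(1 - lam)) := by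
  set s := √(lam / v)
  have hs : s ^ 2 = lam / v := sq_sqrt (by positivity)
  have hgauss : ∀ z, exp (lam * z ^ 2 / (2 * v)) = mgf (fun x => x) (gaussianReal 0 1) (s * z) :=
    fun z => by
      simp only [mgf_fun_id_gaussianReal, NNReal.coe_one, zero_mul, zero_add, one_mul, mul_pow, hs]
      field_simp
  calc ∫⁻ ω, ENNReal.ofReal (exp (lam * Z ω ^ 2 / (2 * v))) ∂μ
      = ∫⁻ ω, ∫⁻ x, ENNReal.ofReal (exp (s * Z ω * x)) ∂gaussianReal 0 1 ∂μ := by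
        simp_rw [hgauss, ofReal_mgf_eq_lintegral (integrable_exp_mul_gaussianReal _)]
    _ = ∫⁻ x, ∫⁻ ω, ENNReal.ofReal (exp ((s * x) * Z ω)) ∂μ ∂gaussianReal 0 1 := by
        rw [lintegral_lintegral_swap (by fun_prop)]
        simp_rw [mul_right_comm s]
    _ = ∫⁻ x, ENNReal.ofReal (mgf Z μ (s * x)) ∂gaussianReal 0 1 := by
        simp_rw [ofReal_mgf_eq_lintegral (hint _)]
    _ ≤ ∫⁻ x, ENNReal.ofReal (exp (lam * x ^ 2 / 2)) ∂gaussianReal 0 1 := by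
        refine lintegral_mono fun x => ENNReal.ofReal_le_ofReal ((hmgf _).trans_eq ?_)
        rw [mul_pow, hs]
        field_simp
    _ = ENNReal.ofReal (1 / √(1 - lam)) := lintegral_exp_mul_sq_gaussianReal hlam1

theorem integral_exp_mul_sq_le_of_mgf_le [SFinite μ] (hZ : AEMeasurable Z μ) {v lam : ℝ}
    (hv : 0 < v) (hlam : lam ∈ Set.Ico (0 : ℝ) 1) (hmgf : ∀ t, mgf Z μ t ≤ exp (v * t ^ 2 / 2)) :
    ∫ ω, exp (lam * Z ω ^ 2 / (2 * v)) ∂μ ≤ 1 / √(1 - lam) := by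
  obtain ⟨hlam0, hlam1⟩ := hlam
  rcases hlam0.eq_or_lt with rfl | hlam_pos
  · simpa [mgf_zero'] using hmgf 0
  -- `hmgf` is void where `exp (t * Z)` is not integrable (its Bochner integral is then `0`), so
  -- integrability has to come from that of `exp (lam * Z ^ 2 / (2 * v))`.
  by_cases hsq : Integrable (fun ω => exp (lam * Z ω ^ 2 / (2 * v))) μ
  · have hint := integrable_exp_mul_of_integrable_exp_mul_sq (c := lam / (2 * v)) (by positivity) hZ
      (by simpa only [div_mul_eq_mul_div] using hsq)
    rw [← ENNReal.ofReal_le_ofReal_iff (by positivity),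
      ofReal_integral_eq_lintegral_ofReal hsq (ae_of_all _ fun _ => (exp_pos _).le)]
    exact lintegral_exp_mul_sq_le_of_mgf_le hZ hv hlam0 hlam1 hint hmgf
  · rw [integral_undef hsq]
    positivity

end ProbabilityTheory

theorem subGaussian_square_mgf_bound_general {Ω : Type*} [MeasurableSpace Ω]
    (μ : Measure Ω) [IsProbabilityMeasure μ]
    (n : ℕ) (hn : 0 < n) (X : Fin n → Ω → ℝ)
    (hmeas : ∀ i, Measurable (X i))
    (hindep : iIndepFun X μ)
    (σ : ℝ) (hσ : 0 < σ)
    (m : ℝ)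
    (hsub : ∀ i, ∀ t : ℝ,
      ∫ ω, Real.exp (t * (X i ω - m)) ∂μ ≤ Real.exp (t ^ 2 * σ ^ 2 / 2))
    (lam : ℝ) (hlam : lam ∈ Set.Ico (0 : ℝ) 1) :
    ∫ ω, Real.exp (n * lam * ((∑ i, X i ω) / n - m) ^ 2 / (2 * σ ^ 2)) ∂μ
      ≤ 1 / Real.sqrt (1 - lam) := by
  have hn' : (0 : ℝ) < n := Nat.cast_pos.mpr hn
  set Y : Fin n → Ω → ℝ := fun i ω => X i ω - m
  have hY : iIndepFun Y μ := hindep.comp _ fun _ => measurable_id.sub_const m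
  have hmean_mgf : ∀ t, mgf (fun ω => (∑ i, X i ω) / n - m) μ t ≤ exp (σ ^ 2 / n * t ^ 2 / 2) :=
    fun t => calc
      mgf (fun ω => (∑ i, X i ω) / n - m) μ t = mgf (∑ i, Y i) μ (t / n) := by
        simp only [mgf, Finset.sum_apply, Y, sum_sub_distrib, sum_const, card_univ,
          Fintype.card_fin, nsmul_eq_mul]
        congr with ω
        field_simp
      _ ≤ exp ((∑ _i : Fin n, σ ^ 2) * (t / n) ^ 2 / 2) :=
        hY.mgf_sum_le (fun i => ((hmeas i).sub_const m).aemeasurable) _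
          fun i _ => (hsub i _).trans_eq (by ring_nf)
      _ = exp (σ ^ 2 / n * t ^ 2 / 2) := by
        simp only [sum_const, card_univ, Fintype.card_fin, nsmul_eq_mul]
        field_simp
  convert integral_exp_mul_sq_le_of_mgf_le (by fun_prop) (by positivity) hlam hmean_mgf using 3
  field_simp

/-- **Moment-generating-function bound for the square of a sub-Gaussian sample average.**
If `X` is `σ`-sub-Gaussian and `S` is the average of `n` independent copies of `X`, then for
every `λ ∈ [0,1)`, `E[exp(nλ(S − E X)²/(2σ²))] ≤ 1/√(1−λ)`. -/
theorem subGaussian_square_mgf_bound {Ω : Type*} [MeasurableSpace Ω]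
    (μ : Measure Ω) [IsProbabilityMeasure μ]
    (n : ℕ) (hn : 0 < n) (X : Fin n → Ω → ℝ)
    (hmeas : ∀ i, Measurable (X i))
    (hindep : iIndepFun X μ)
    (hident : ∀ i j, Measure.map (X i) μ = Measure.map (X j) μ)
    (σ : ℝ) (hσ : 0 < σ)
    (m : ℝ) (hmean : ∀ i, ∫ ω, X i ω ∂μ = m)
    (hsub : ∀ i, ∀ t : ℝ,
      ∫ ω, Real.exp (t * (X i ω - m)) ∂μ ≤ Real.exp (t ^ 2 * σ ^ 2 / 2))
    (lam : ℝ) (hlam : lam ∈ Set.Ico (0 : ℝ) 1) :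
    ∫ ω, Real.exp (n * lam * ((∑ i, X i ω) / n - m) ^ 2 / (2 * σ ^ 2)) ∂μ
      ≤ 1 / Real.sqrt (1 - lam) :=
  subGaussian_square_mgf_bound_general μ n hn X hmeas hindep σ hσ m hsub lam hlam
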